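/- Let G be a finite connected simple graph containing two vertices u and v, and let H be a nontrivial (i.e., having at least two vertices) finite connected simple graph, vertex-disjoint from G, containing a vertex w. If (G;u,u) ≻ (G;v,v), then EE(G(u)∘H(w)) > EE(G(v)∘H(w)). -/

import Mathlib

open SimpleGraph Matrix Polynomial

namespace EstradaBicyclic

variable {V W : Type*}

/-- `Mk G k u v` is the number of walks of length `k` from `u` to `v` in `G`,
computed as the `(u,v)` entry of the `k`-th power of the adjacency matrix. -/
noncomputable def Mk [Fintype V] (G : SimpleGraph V) (k : ℕ) (u v : V) : ℕ :=
  letI := Classical.decEq V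
  letI := Classical.decRel G.Adj
  (G.adjMatrix ℕ ^ k) u v

/-- The Estrada index of a finite graph: the trace of the matrix exponential of the
adjacency matrix. -/
noncomputable def EE [Fintype V] (G : SimpleGraph V) : ℝ :=
  letI := Classical.decEq V
  letI := Classical.decRel G.Adj
  (NormedSpace.exp (G.adjMatrix ℝ)).trace

/-- `(G;u,v) ⪯ (H;s,t)`: for every positive `k`, the number of `k`-walks from `u` to `v`
in `G` is at most the number of `k`-walks from `s` to `t` in `H`. -/
def MLE [Fintype V] [Fintype W] (G : SimpleGraph V) (u v : V)
    (H : SimpleGraph W) (s t : W) : Prop :=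
  ∀ k : ℕ, 0 < k → Mk G k u v ≤ Mk H k s t

/-- `(G;u,v) ≺ (H;s,t)`: `⪯` together with strict inequality for at least one positive `k`. -/
def MLT [Fintype V] [Fintype W] (G : SimpleGraph V) (u v : V)
    (H : SimpleGraph W) (s t : W) : Prop :=
  MLE G u v H s t ∧ ∃ k : ℕ, 0 < k ∧ Mk G k u v < Mk H k s t

/-- The degree of a vertex, via the natural cardinality of its neighbor set. -/
noncomputable def deg (G : SimpleGraph V) (x : V) : ℕ :=
  (G.neighborSet x).ncard

/-- The coalescence `G(u)∘H(w)` of two vertex-disjoint graphs: identify `u ∈ V(G)`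
with `w ∈ V(H)`.  The merged vertex is represented by `Sum.inl u`. -/
def coalescence (G : SimpleGraph V) (H : SimpleGraph W) (u : V) (w : W) :
    SimpleGraph (V ⊕ {x : W // x ≠ w}) where
  Adj x y :=
    match x, y with
    | Sum.inl a, Sum.inl b => G.Adj a b
    | Sum.inl a, Sum.inr b => a = u ∧ H.Adj w b.1
    | Sum.inr a, Sum.inl b => b = u ∧ H.Adj w a.1
    | Sum.inr a, Sum.inr b => H.Adj a.1 b.1
  symm := by
    constructor
    rintro (a | a) (b | b) h
    · exact h.symm
    · exact h
    · exact h
    · exact h.symm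
  loopless := by
    constructor
    rintro (a | a) h
    · exact G.irrefl h
    · exact H.irrefl h

/-- A connected graph is bicyclic when its number of edges exceeds its number of
vertices by one. -/
def IsBicyclic [Fintype V] (G : SimpleGraph V) : Prop :=
  G.Connected ∧ G.edgeSet.ncard = Fintype.card V + 1

/-- A connected graph is unicyclic when its number of edges equals its number of vertices. -/
def IsUnicyclic [Fintype V] (G : SimpleGraph V) : Prop :=
  G.Connected ∧ G.edgeSet.ncard = Fintype.card V

/-- Two walks with common endpoints `u`, `v` are internally disjoint. -/
def InternallyDisjoint {G : SimpleGraph V} {u v : V} (P Q : G.Walk u v) : Prop :=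
  ∀ x, x ∈ P.support → x ∈ Q.support → x = u ∨ x = v

/-- Numerical constraints for a theta graph `θ(p,q,l)`: all lengths positive and at most
one of them equal to `1`. -/
def ThetaConstraints (p q l : ℕ) : Prop :=
  1 ≤ p ∧ 1 ≤ q ∧ 1 ≤ l ∧ ¬(p = 1 ∧ q = 1) ∧ ¬(p = 1 ∧ l = 1) ∧ ¬(q = 1 ∧ l = 1)

/-- `P₁, P₂, P₃` are three internally disjoint paths of lengths `p, q, l` joining `u` to `v`. -/
def ThetaPaths {G : SimpleGraph V} {u v : V} (p q l : ℕ)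
    (P₁ P₂ P₃ : G.Walk u v) : Prop :=
  P₁.IsPath ∧ P₂.IsPath ∧ P₃.IsPath ∧
  P₁.length = p ∧ P₂.length = q ∧ P₃.length = l ∧
  InternallyDisjoint P₁ P₂ ∧ InternallyDisjoint P₁ P₃ ∧ InternallyDisjoint P₂ P₃

/-- `G` contains `θ(p,q,l)` as a subgraph with branch vertices `u` and `v`. -/
def HasThetaKernel (G : SimpleGraph V) (p q l : ℕ) (u v : V) : Prop :=
  ThetaConstraints p q l ∧ ∃ P₁ P₂ P₃ : G.Walk u v, ThetaPaths p q l P₁ P₂ P₃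

/-- `G` is exactly the theta graph `θ(p,q,l)` with branch vertices `u`, `v`:
the three paths cover all vertices and all edges of `G`. -/
def IsThetaGraph (G : SimpleGraph V) (p q l : ℕ) (u v : V) : Prop :=
  ThetaConstraints p q l ∧ ∃ P₁ P₂ P₃ : G.Walk u v, ThetaPaths p q l P₁ P₂ P₃ ∧
    (∀ x : V, x ∈ P₁.support ∨ x ∈ P₂.support ∨ x ∈ P₃.support) ∧
    (∀ e ∈ G.edgeSet, e ∈ P₁.edges ∨ e ∈ P₂.edges ∨ e ∈ P₃.edges)

/-- Every vertex of `G` outside the three paths is a pendant vertex whose unique neighbor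
lies on the paths, and every edge of `G` between vertices of the paths is an edge of one
of the paths. I.e. `G` is obtained from the union of the three paths by attaching pendant
edges at some of its vertices. -/
def PendantConditions (G : SimpleGraph V) {u v : V} (P₁ P₂ P₃ : G.Walk u v) : Prop :=
  (∀ x : V, x ∉ P₁.support → x ∉ P₂.support → x ∉ P₃.support →
    ∃ y, (y ∈ P₁.support ∨ y ∈ P₂.support ∨ y ∈ P₃.support) ∧
      G.Adj x y ∧ ∀ z, G.Adj x z → z = y) ∧
  (∀ e ∈ G.edgeSet, (∀ x ∈ e, x ∈ P₁.support ∨ x ∈ P₂.support ∨ x ∈ P₃.support) →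
    e ∈ P₁.edges ∨ e ∈ P₂.edges ∨ e ∈ P₃.edges)

/-- `G` is obtained from the theta graph `θ(p,q,l)` (with branch vertices `u`, `v`)
by attaching pendant edges at some of its vertices. -/
def ThetaWithPendants (G : SimpleGraph V) (p q l : ℕ) (u v : V) : Prop :=
  ThetaConstraints p q l ∧ ∃ P₁ P₂ P₃ : G.Walk u v,
    ThetaPaths p q l P₁ P₂ P₃ ∧ PendantConditions G P₁ P₂ P₃

/-- Numerical constraints for an infinity graph `∞(p,q,l)`. -/
def InftyConstraints (p q l : ℕ) : Prop := 3 ≤ p ∧ 3 ≤ q ∧ 1 ≤ l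

/-- `c₁`, `c₂`, `P` form an `∞(p,q,l)`-configuration: cycles of lengths `p` and `q`
through `a` and `b` respectively, joined by a path of length `l-1` from `a` to `b`,
with the correct disjointness. -/
def InftyPaths {G : SimpleGraph V} {a b : V} (p q l : ℕ)
    (c₁ : G.Walk a a) (c₂ : G.Walk b b) (P : G.Walk a b) : Prop :=
  c₁.IsCycle ∧ c₂.IsCycle ∧ P.IsPath ∧
  c₁.length = p ∧ c₂.length = q ∧ P.length = l - 1 ∧
  (∀ x, x ∈ c₁.support → x ∈ c₂.support → x = a ∧ x = b) ∧
  (∀ x, x ∈ c₁.support → x ∈ P.support → x = a) ∧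
  (∀ x, x ∈ c₂.support → x ∈ P.support → x = b)

/-- `G` contains `∞(p,q,l)` as a subgraph, with cycle base vertices `a` and `b`. -/
def HasInftyKernel (G : SimpleGraph V) (p q l : ℕ) (a b : V) : Prop :=
  InftyConstraints p q l ∧ ∃ (c₁ : G.Walk a a) (c₂ : G.Walk b b) (P : G.Walk a b),
    InftyPaths p q l c₁ c₂ P

/-- `G` is obtained from the infinity graph `∞(p,q,l)` by attaching pendant edges at
some of its vertices. -/
def InftyWithPendants (G : SimpleGraph V) (p q l : ℕ) (a b : V) : Prop :=
  InftyConstraints p q l ∧ ∃ (c₁ : G.Walk a a) (c₂ : G.Walk b b) (P : G.Walk a b),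
    InftyPaths p q l c₁ c₂ P ∧
    (∀ x : V, x ∉ c₁.support → x ∉ c₂.support → x ∉ P.support →
      ∃ y, (y ∈ c₁.support ∨ y ∈ c₂.support ∨ y ∈ P.support) ∧
        G.Adj x y ∧ ∀ z, G.Adj x z → z = y) ∧
    (∀ e ∈ G.edgeSet, (∀ x ∈ e, x ∈ c₁.support ∨ x ∈ c₂.support ∨ x ∈ P.support) →
      e ∈ c₁.edges ∨ e ∈ c₂.edges ∨ e ∈ P.edges)

/-- Membership in `𝒢_∞(n;p,q)`: bicyclic graphs of order `n` whose kernel is an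
`∞`-graph with cycle lengths `p` and `q`. -/
def MemGInfty [Fintype V] (n p q : ℕ) (G : SimpleGraph V) : Prop :=
  Fintype.card V = n ∧ IsBicyclic G ∧ ∃ (l : ℕ) (a b : V), HasInftyKernel G p q l a b

/-- Membership in `𝒢_θ(n;p,q)`: bicyclic graphs of order `n` whose kernel is a
`θ`-graph `θ(p',q',l')` with `p' ≥ q' ≥ l'`, `p' + l' = p` and `q' + l' = q`. -/
def MemGTheta [Fintype V] (n p q : ℕ) (G : SimpleGraph V) : Prop :=
  Fintype.card V = n ∧ IsBicyclic G ∧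
    ∃ (p' q' l' : ℕ) (u v : V), l' ≤ q' ∧ q' ≤ p' ∧ p' + l' = p ∧ q' + l' = q ∧
      HasThetaKernel G p' q' l' u v

/-- `G` is the graph `𝐆₁`: obtained from `θ(2,2,1)` by attaching pendant edges at the
branch vertex `u` (a vertex of degree 3 of the theta graph). -/
def IsG1 [Fintype V] (G : SimpleGraph V) : Prop :=
  ∃ (u v : V) (P₁ P₂ P₃ : G.Walk u v), ThetaPaths 2 2 1 P₁ P₂ P₃ ∧
    (∀ x : V, x ∉ P₁.support → x ∉ P₂.support → x ∉ P₃.support →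
      G.Adj x u ∧ ∀ z, G.Adj x z → z = u) ∧
    (∀ e ∈ G.edgeSet, (∀ x ∈ e, x ∈ P₁.support ∨ x ∈ P₂.support ∨ x ∈ P₃.support) →
      e ∈ P₁.edges ∨ e ∈ P₂.edges ∨ e ∈ P₃.edges)

/-- `G` is the graph `𝐆₂`: obtained from `θ(2,2,2)` by attaching pendant edges at the
branch vertex `u` (a vertex of degree 3 of the theta graph). -/
def IsG2 [Fintype V] (G : SimpleGraph V) : Prop :=
  ∃ (u v : V) (P₁ P₂ P₃ : G.Walk u v), ThetaPaths 2 2 2 P₁ P₂ P₃ ∧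
    (∀ x : V, x ∉ P₁.support → x ∉ P₂.support → x ∉ P₃.support →
      G.Adj x u ∧ ∀ z, G.Adj x z → z = u) ∧
    (∀ e ∈ G.edgeSet, (∀ x ∈ e, x ∈ P₁.support ∨ x ∈ P₂.support ∨ x ∈ P₃.support) →
      e ∈ P₁.edges ∨ e ∈ P₂.edges ∨ e ∈ P₃.edges)

/-- The largest adjacency eigenvalue of a finite graph. -/
noncomputable def lambda1 [Fintype V] (G : SimpleGraph V) : ℝ :=
  letI := Classical.decEq V
  letI := Classical.decRel G.Adj
  have h : (G.adjMatrix ℝ).IsHermitian := by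
    rw [Matrix.IsHermitian, Matrix.conjTranspose_eq_transpose_of_trivial]
    exact G.isSymm_adjMatrix
  ⨆ i, h.eigenvalues i

/-- The characteristic polynomial of the adjacency matrix of a finite graph. -/
noncomputable def charPoly [Fintype V] (G : SimpleGraph V) : Polynomial ℝ :=
  letI := Classical.decEq V
  letI := Classical.decRel G.Adj
  (G.adjMatrix ℝ).charpoly

set_option linter.unusedSectionVars false

section AuxGeneric

variable {ι : Type*} [Fintype ι] [DecidableEq ι]

lemma pow_expand (A N P : Matrix ι ι ℝ) (h : A = N + P) (k : ℕ) :
    A ^ k = N ^ k + ∑ a ∈ Finset.range k, A ^ a * P * N ^ (k - 1 - a) := by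
  induction k with
  | zero => simp
  | succ k ih =>
    have h1 : A ^ (k+1) = A ^ k * N + A ^ k * P := by
      rw [pow_succ, h, mul_add]
    rw [h1, ih, Finset.sum_range_succ, add_mul, Finset.sum_mul]
    have hterm : ∀ a ∈ Finset.range k,
        A ^ a * P * N ^ (k - 1 - a) * N = A ^ a * P * N ^ (k + 1 - 1 - a) := by
      intro a ha
      rw [Finset.mem_range] at ha
      rw [mul_assoc (A ^ a * P), ← pow_succ]
      congr 2
      omega
    rw [Finset.sum_congr rfl hterm, ← pow_succ, ← ih]
    simp only [Nat.add_sub_cancel, Nat.sub_self, pow_zero, mul_one]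
    abel

lemma vecMulVec_mulVec' (x y z : ι → ℝ) : vecMulVec x y *ᵥ z = (y ⬝ᵥ z) • x := by
  ext i
  simp only [vecMulVec_apply, mulVec, dotProduct, Pi.smul_apply, smul_eq_mul, Finset.sum_mul,
    Finset.mul_sum]
  exact Finset.sum_congr rfl fun j _ => by ring

lemma sandwich (M₀ M₁ M₂ : Matrix ι ι ℝ) (x y p q : ι → ℝ) :
    q ⬝ᵥ ((M₀ * (M₁ * vecMulVec x y * M₂)) *ᵥ p) =
      (q ⬝ᵥ ((M₀ * M₁) *ᵥ x)) * (y ⬝ᵥ (M₂ *ᵥ p)) := by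
  rw [← Matrix.mulVec_mulVec, ← Matrix.mulVec_mulVec, ← Matrix.mulVec_mulVec,
    vecMulVec_mulVec', Matrix.mulVec_smul, Matrix.mulVec_smul, dotProduct_smul,
    Matrix.mulVec_mulVec, smul_eq_mul]
  ring

lemma trace_mul_vecMulVec (M : Matrix ι ι ℝ) (x y : ι → ℝ) :
    (M * vecMulVec x y).trace = y ⬝ᵥ (M *ᵥ x) := by
  simp only [Matrix.trace, Matrix.diag, Matrix.mul_apply, vecMulVec_apply, dotProduct, mulVec,
    Finset.mul_sum]
  refine Finset.sum_congr rfl fun i _ => Finset.sum_congr rfl fun j _ => by ring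

lemma sum_mulVec' {s : Finset ℕ} (M : ℕ → Matrix ι ι ℝ) (p : ι → ℝ) :
    (∑ e ∈ s, M e) *ᵥ p = ∑ e ∈ s, M e *ᵥ p := by
  ext i
  simp only [mulVec, dotProduct, Matrix.sum_apply, Finset.sum_mul, Finset.sum_apply]
  rw [Finset.sum_comm]

lemma dotProduct_sum' {s : Finset ℕ} (q : ι → ℝ) (z : ℕ → ι → ℝ) :
    q ⬝ᵥ (∑ e ∈ s, z e) = ∑ e ∈ s, q ⬝ᵥ z e := by
  simp only [dotProduct, Finset.sum_apply, Finset.mul_sum]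
  rw [Finset.sum_comm]

lemma mul_entry_nonneg {M M' : Matrix ι ι ℝ} (h : ∀ i j, 0 ≤ M i j) (h' : ∀ i j, 0 ≤ M' i j) :
    ∀ i j, 0 ≤ (M * M') i j := by
  intro i j
  rw [Matrix.mul_apply]
  exact Finset.sum_nonneg fun k _ => mul_nonneg (h i k) (h' k j)

lemma pow_entry_nonneg {M : Matrix ι ι ℝ} (h : ∀ i j, 0 ≤ M i j) (k : ℕ) :
    ∀ i j, 0 ≤ (M ^ k) i j := by
  induction k with
  | zero => intro i j; rw [pow_zero]; by_cases hij : i = j <;> simp [Matrix.one_apply, hij]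
  | succ k ih => rw [pow_succ]; exact mul_entry_nonneg ih h

lemma dot_mulVec_nonneg {M : Matrix ι ι ℝ} {p q : ι → ℝ} (hM : ∀ i j, 0 ≤ M i j)
    (hp : ∀ i, 0 ≤ p i) (hq : ∀ i, 0 ≤ q i) : 0 ≤ q ⬝ᵥ (M *ᵥ p) :=
  Finset.sum_nonneg fun i _ => mul_nonneg (hq i)
    (Finset.sum_nonneg fun j _ => mul_nonneg (hM i j) (hp j))


lemma trace_exp_eq {ι : Type*} [Fintype ι] [DecidableEq ι] (A : Matrix ι ι ℝ) :
    (NormedSpace.exp A).trace = ∑' k : ℕ, ((k.factorial : ℝ)⁻¹ • (A ^ k).trace) ∧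
    Summable (fun k : ℕ => ((k.factorial : ℝ)⁻¹ • (A ^ k).trace)) := by
  letI : SeminormedRing (Matrix ι ι ℝ) := Matrix.linftyOpSemiNormedRing
  letI : NormedRing (Matrix ι ι ℝ) := Matrix.linftyOpNormedRing
  letI : NormedAlgebra ℝ (Matrix ι ι ℝ) := Matrix.linftyOpNormedAlgebra
  have hsum : Summable (fun k : ℕ => (k.factorial : ℝ)⁻¹ • A ^ k) :=
    NormedSpace.expSeries_summable' A
  let T : Matrix ι ι ℝ →L[ℝ] ℝ :=
    LinearMap.toContinuousLinearMap (Matrix.traceLinearMap ι ℝ ℝ)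
  have hT : ∀ M : Matrix ι ι ℝ, T M = M.trace := fun M => rfl
  constructor
  · rw [NormedSpace.exp_eq_tsum ℝ]
    rw [← hT, T.map_tsum hsum]
    simp only [hT, Matrix.trace_smul]
  · have := hsum.map T.toLinearMap.toAddMonoidHom T.continuous
    exact this.congr fun k => by simp [hT, Matrix.trace_smul]

end AuxGeneric

noncomputable section Defs

variable {V W : Type*}

/-- The restricted adjacency matrix of `H` on `W \ {w}`. -/
def DD (H : SimpleGraph W) (w : W) : Matrix {x : W // x ≠ w} {x : W // x ≠ w} ℝ :=
  letI := Classical.decRel H.Adj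
  Matrix.of fun a b => if H.Adj a.1 b.1 then (1 : ℝ) else 0

/-- Block-diagonal matrix. -/
def NN [Fintype V] [DecidableEq V] (G : SimpleGraph V) [DecidableRel G.Adj]
    (H : SimpleGraph W) (w : W) :
    Matrix (V ⊕ {x : W // x ≠ w}) (V ⊕ {x : W // x ≠ w}) ℝ :=
  Matrix.fromBlocks (G.adjMatrix ℝ) 0 0 (DD H w)

/-- Indicator vector of the neighbours of `w` inside `W \ {w}`. -/
def rr (H : SimpleGraph W) (w : W) : {x : W // x ≠ w} → ℝ :=
  letI := Classical.decRel H.Adj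
  fun b => if H.Adj w b.1 then 1 else 0

def gg (G : SimpleGraph V) (H : SimpleGraph W) (w : W) : (V ⊕ {x : W // x ≠ w}) → ℝ :=
  let _ := G
  Sum.elim 0 (rr H w)

def ff [DecidableEq V] (G : SimpleGraph V) (H : SimpleGraph W) (w : W) (c : V) :
    (V ⊕ {x : W // x ≠ w}) → ℝ :=
  let _ := G; let _ := H
  Sum.elim (Pi.single c 1) 0

def AA (G : SimpleGraph V) (H : SimpleGraph W) (w : W) (c : V) :
    Matrix (V ⊕ {x : W // x ≠ w}) (V ⊕ {x : W // x ≠ w}) ℝ :=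
  letI := Classical.decRel (coalescence G H c w).Adj
  (coalescence G H c w).adjMatrix ℝ

end Defs

section Setup

variable {V W : Type*} [Fintype V] [Fintype W] [DecidableEq V] [DecidableEq W]
variable (G : SimpleGraph V) (H : SimpleGraph W) [DecidableRel G.Adj] [DecidableRel H.Adj]
variable (w : W)

lemma single_comp_inl (c : V) :
    (Pi.single (Sum.inl c : V ⊕ {x : W // x ≠ w}) (1 : ℝ)) ∘ Sum.inl = Pi.single c 1 := by
  ext a
  simp [Pi.single_apply, Function.comp]

lemma single_comp_inr (c : V) :
    (Pi.single (Sum.inl c : V ⊕ {x : W // x ≠ w}) (1 : ℝ)) ∘ Sum.inr = 0 := by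
  ext a
  simp [Pi.single_apply, Function.comp]

lemma AA_eq (c : V) :
    AA G H w c = NN G H w +
      (vecMulVec (ff G H w c) (gg G H w) + vecMulVec (gg G H w) (ff G H w c)) := by
  letI := Classical.decRel (coalescence G H c w).Adj
  ext i j
  simp only [AA, SimpleGraph.adjMatrix_apply]
  rcases i with a | a <;> rcases j with b | b <;>
    simp only [AA, SimpleGraph.adjMatrix_apply, NN, DD, gg, ff, rr, Matrix.add_apply,
      vecMulVec_apply, Sum.elim_inl, Sum.elim_inr, Matrix.fromBlocks_apply₁₁,
      Matrix.fromBlocks_apply₁₂, Matrix.fromBlocks_apply₂₁, Matrix.fromBlocks_apply₂₂,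
      Matrix.zero_apply, Pi.zero_apply, Matrix.of_apply, Pi.single_apply, coalescence]
  · split_ifs <;> simp_all
  · by_cases h1 : a = c <;> by_cases h2 : H.Adj w b.1 <;>
      simp [h1, h2]
  · by_cases h1 : b = c <;> by_cases h2 : H.Adj w a.1 <;>
      simp [h1, h2]
  · split_ifs <;> simp_all

lemma NN_pow (m : ℕ) :
    NN G H w ^ m = Matrix.fromBlocks ((G.adjMatrix ℝ) ^ m) 0 0 (DD H w ^ m) := by
  induction m with
  | zero => simp [Matrix.fromBlocks_one]
  | succ m ih => rw [pow_succ, pow_succ, pow_succ, ih, NN, Matrix.fromBlocks_multiply]; simp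

lemma base_ff_ff (c c' : V) (m : ℕ) :
    ff G H w c ⬝ᵥ (NN G H w ^ m *ᵥ ff G H w c') = ((G.adjMatrix ℝ) ^ m) c c' := by
  rw [NN_pow, ff, ff, Matrix.fromBlocks_mulVec]
  simp [sumElim_dotProduct_sumElim, Matrix.mulVec_single, single_dotProduct,
    Matrix.mulVec_zero, single_comp_inl, single_comp_inr, Sum.elim_comp_inl, Sum.elim_comp_inr]

lemma base_ff_gg (c : V) (m : ℕ) : ff G H w c ⬝ᵥ (NN G H w ^ m *ᵥ gg G H w) = 0 := by
  rw [NN_pow, ff, gg, Matrix.fromBlocks_mulVec]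
  simp [sumElim_dotProduct_sumElim, single_comp_inl, single_comp_inr,
    Sum.elim_comp_inl, Sum.elim_comp_inr]

lemma base_gg_ff (c : V) (m : ℕ) : gg G H w ⬝ᵥ (NN G H w ^ m *ᵥ ff G H w c) = 0 := by
  rw [NN_pow, ff, gg, Matrix.fromBlocks_mulVec]
  simp [sumElim_dotProduct_sumElim, Matrix.zero_mulVec, Matrix.col, single_comp_inl, single_comp_inr,
    Sum.elim_comp_inl, Sum.elim_comp_inr]
  exact dotProduct_zero _

lemma NN_nonneg : ∀ i j, 0 ≤ NN G H w i j := by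
  intro i j
  rcases i with a | a <;> rcases j with b | b <;>
    simp only [NN, DD, Matrix.fromBlocks_apply₁₁, Matrix.fromBlocks_apply₁₂,
      Matrix.fromBlocks_apply₂₁, Matrix.fromBlocks_apply₂₂, Matrix.zero_apply,
      SimpleGraph.adjMatrix_apply, Matrix.of_apply, le_refl]
  · split_ifs <;> norm_num
  · split_ifs <;> norm_num

lemma AA_nonneg (c : V) : ∀ i j, 0 ≤ AA G H w c i j := by
  letI := Classical.decRel (coalescence G H c w).Adj
  intro i j
  simp only [AA, SimpleGraph.adjMatrix_apply]
  split_ifs <;> norm_num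

lemma gg_nonneg : ∀ i, 0 ≤ gg G H w i := by
  rintro (a | a) <;> simp only [gg, rr, Sum.elim_inl, Sum.elim_inr, Pi.zero_apply, le_refl]
  split_ifs <;> norm_num

lemma ff_nonneg (c : V) : ∀ i, 0 ≤ ff G H w c i := by
  rintro (a | a) <;> simp only [ff, Sum.elim_inl, Sum.elim_inr, Pi.zero_apply, le_refl,
    Pi.single_apply]
  split_ifs <;> norm_num


/-- The fundamental scalar quantity `q ⬝ᵥ (N^b A_c^a p)`. -/
noncomputable def YY (c : V) (q p : (V ⊕ {x : W // x ≠ w}) → ℝ) (a b : ℕ) : ℝ :=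
  q ⬝ᵥ ((NN G H w ^ b * AA G H w c ^ a) *ᵥ p)

lemma YY_nonneg (c : V) {q p : (V ⊕ {x : W // x ≠ w}) → ℝ}
    (hq : ∀ i, 0 ≤ q i) (hp : ∀ i, 0 ≤ p i) (a b : ℕ) : 0 ≤ YY G H w c q p a b :=
  dot_mulVec_nonneg (mul_entry_nonneg (pow_entry_nonneg (NN_nonneg G H w) b)
    (pow_entry_nonneg (AA_nonneg G H w c) a)) hp hq

lemma Y_expand (c : V) (q p : (V ⊕ {x : W // x ≠ w}) → ℝ) (a b : ℕ) :
    YY G H w c q p a b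
      = q ⬝ᵥ (NN G H w ^ (b + a) *ᵥ p)
        + ∑ e ∈ Finset.range a,
            (YY G H w c q (ff G H w c) e b *
                (gg G H w ⬝ᵥ (NN G H w ^ (a - 1 - e) *ᵥ p))
              + YY G H w c q (gg G H w) e b *
                (ff G H w c ⬝ᵥ (NN G H w ^ (a - 1 - e) *ᵥ p))) := by
  set N := NN G H w with hN
  set A := AA G H w c with hA
  set f := ff G H w c with hf
  set g := gg G H w with hg
  have hexp := pow_expand A N (vecMulVec f g + vecMulVec g f)
    (by rw [hA, hN, hf, hg]; exact AA_eq G H w c) a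
  have h1 : N ^ b * A ^ a
      = N ^ (b + a) + ∑ e ∈ Finset.range a,
          N ^ b * (A ^ e * (vecMulVec f g + vecMulVec g f) * N ^ (a - 1 - e)) := by
    rw [hexp, mul_add, Finset.mul_sum, pow_add]
  rw [YY, h1, Matrix.add_mulVec, dotProduct_add, sum_mulVec', dotProduct_sum']
  congr 1
  refine Finset.sum_congr rfl fun e he => ?_
  have h2 : A ^ e * (vecMulVec f g + vecMulVec g f) * N ^ (a - 1 - e)
      = A ^ e * vecMulVec f g * N ^ (a - 1 - e) + A ^ e * vecMulVec g f * N ^ (a - 1 - e) := by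
    rw [mul_add, add_mul]
  rw [h2, mul_add, Matrix.add_mulVec, dotProduct_add, sandwich, sandwich]
  rfl

variable {G} in
lemma Ycomp (u v : V)
    (hcomp : ∀ m, ((G.adjMatrix ℝ) ^ m) v v ≤ ((G.adjMatrix ℝ) ^ m) u u) :
    ∀ a b : ℕ,
      YY G H w v (gg G H w) (gg G H w) a b ≤ YY G H w u (gg G H w) (gg G H w) a b ∧
      YY G H w v (gg G H w) (ff G H w v) a b ≤ YY G H w u (gg G H w) (ff G H w u) a b ∧
      YY G H w v (ff G H w v) (gg G H w) a b ≤ YY G H w u (ff G H w u) (gg G H w) a b ∧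
      YY G H w v (ff G H w v) (ff G H w v) a b ≤ YY G H w u (ff G H w u) (ff G H w u) a b := by
  intro a
  induction a using Nat.strong_induction_on with
  | _ a ih =>
    intro b
    have hα : ∀ m, (0:ℝ) ≤ ((G.adjMatrix ℝ) ^ m) v v :=
      fun m => pow_entry_nonneg (fun i j => by simp [SimpleGraph.adjMatrix_apply]; split_ifs <;> norm_num) m v v
    have hαu : ∀ m, (0:ℝ) ≤ ((G.adjMatrix ℝ) ^ m) u u :=
      fun m => pow_entry_nonneg (fun i j => by simp [SimpleGraph.adjMatrix_apply]; split_ifs <;> norm_num) m u u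
    have hβ : ∀ m, (0:ℝ) ≤ gg G H w ⬝ᵥ (NN G H w ^ m *ᵥ gg G H w) :=
      fun m => dot_mulVec_nonneg (pow_entry_nonneg (NN_nonneg G H w) m)
        (gg_nonneg G H w) (gg_nonneg G H w)
    refine ⟨?_, ?_, ?_, ?_⟩
    · rw [Y_expand, Y_expand]
      refine add_le_add le_rfl (Finset.sum_le_sum fun e he => ?_)
      rw [Finset.mem_range] at he
      rw [base_ff_gg, base_ff_gg, mul_zero, mul_zero, add_zero, add_zero]
      exact mul_le_mul_of_nonneg_right ((ih e he b).2.1) (hβ _)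
    · rw [Y_expand, Y_expand]
      rw [base_gg_ff, base_gg_ff]
      refine add_le_add le_rfl (Finset.sum_le_sum fun e he => ?_)
      rw [Finset.mem_range] at he
      rw [base_gg_ff, base_gg_ff, mul_zero, mul_zero, zero_add, zero_add,
        base_ff_ff, base_ff_ff]
      exact mul_le_mul ((ih e he b).1) (hcomp _) (hα _)
        (le_trans (YY_nonneg G H w v (gg_nonneg G H w) (gg_nonneg G H w) e b) ((ih e he b).1))
    · rw [Y_expand, Y_expand]
      rw [base_ff_gg, base_ff_gg]
      refine add_le_add le_rfl (Finset.sum_le_sum fun e he => ?_)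
      rw [Finset.mem_range] at he
      rw [base_ff_gg, base_ff_gg, mul_zero, mul_zero, add_zero, add_zero]
      exact mul_le_mul_of_nonneg_right ((ih e he b).2.2.2) (hβ _)
    · rw [Y_expand, Y_expand]
      rw [base_ff_ff, base_ff_ff]
      refine add_le_add (hcomp _) (Finset.sum_le_sum fun e he => ?_)
      rw [Finset.mem_range] at he
      rw [base_gg_ff, base_gg_ff, mul_zero, mul_zero, zero_add, zero_add,
        base_ff_ff, base_ff_ff]
      exact mul_le_mul ((ih e he b).2.2.1) (hcomp _) (hα _)
        (le_trans (YY_nonneg G H w v (ff_nonneg G H w v) (gg_nonneg G H w) e b)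
          ((ih e he b).2.2.1))

lemma trace_formula (c : V) (k : ℕ) :
    (AA G H w c ^ k).trace
      = (NN G H w ^ k).trace
        + ∑ a ∈ Finset.range k,
            (YY G H w c (gg G H w) (ff G H w c) a (k - 1 - a)
              + YY G H w c (ff G H w c) (gg G H w) a (k - 1 - a)) := by
  set N := NN G H w with hN
  set A := AA G H w c with hA
  set f := ff G H w c with hf
  set g := gg G H w with hg
  have hexp := pow_expand A N (vecMulVec f g + vecMulVec g f)
    (by rw [hA, hN, hf, hg]; exact AA_eq G H w c) k
  rw [hexp, Matrix.trace_add, Matrix.trace_sum]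
  congr 1
  refine Finset.sum_congr rfl fun a ha => ?_
  have h2 : A ^ a * (vecMulVec f g + vecMulVec g f) * N ^ (k - 1 - a)
      = A ^ a * vecMulVec f g * N ^ (k - 1 - a) + A ^ a * vecMulVec g f * N ^ (k - 1 - a) := by
    rw [mul_add, add_mul]
  rw [h2, Matrix.trace_add]
  have c1 : A ^ a * vecMulVec f g * N ^ (k - 1 - a)
      = A ^ a * (vecMulVec f g * N ^ (k - 1 - a)) := by rw [mul_assoc]
  have t1 : (A ^ a * vecMulVec f g * N ^ (k - 1 - a)).trace
      = g ⬝ᵥ ((N ^ (k - 1 - a) * A ^ a) *ᵥ f) := by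
    rw [Matrix.trace_mul_comm, ← mul_assoc, trace_mul_vecMulVec]
  have t2 : (A ^ a * vecMulVec g f * N ^ (k - 1 - a)).trace
      = f ⬝ᵥ ((N ^ (k - 1 - a) * A ^ a) *ᵥ g) := by
    rw [Matrix.trace_mul_comm, ← mul_assoc, trace_mul_vecMulVec]
  rw [t1, t2]
  rfl


variable {G} in
lemma trace_le (u v : V)
    (hcomp : ∀ m, ((G.adjMatrix ℝ) ^ m) v v ≤ ((G.adjMatrix ℝ) ^ m) u u) (k : ℕ) :
    (AA G H w v ^ k).trace ≤ (AA G H w u ^ k).trace := by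
  rw [trace_formula, trace_formula]
  refine add_le_add le_rfl (Finset.sum_le_sum fun a _ => ?_)
  exact add_le_add (Ycomp H w u v hcomp a _).2.1 (Ycomp H w u v hcomp a _).2.2.1

variable {G} in
lemma trace_lt (u v : V)
    (hcomp : ∀ m, ((G.adjMatrix ℝ) ^ m) v v ≤ ((G.adjMatrix ℝ) ^ m) u u)
    (k₀ : ℕ) (hstrict : ((G.adjMatrix ℝ) ^ k₀) v v < ((G.adjMatrix ℝ) ^ k₀) u u)
    (hD : 0 < gg G H w ⬝ᵥ gg G H w) :
    (AA G H w v ^ (k₀ + 2)).trace < (AA G H w u ^ (k₀ + 2)).trace := by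
  rw [trace_formula, trace_formula]
  refine add_lt_add_right ?_ _
  refine Finset.sum_lt_sum
    (fun a _ => add_le_add (Ycomp H w u v hcomp a _).2.1 (Ycomp H w u v hcomp a _).2.2.1)
    ⟨k₀ + 1, by simp [Finset.mem_range], ?_⟩
  refine add_lt_add_of_lt_of_le ?_ (Ycomp H w u v hcomp _ _).2.2.1
  -- strict comparison of `Y gg ff (k₀+1) d` where `d = (k₀+2) - 1 - (k₀+1) = 0`
  have hd : k₀ + 2 - 1 - (k₀ + 1) = 0 := by omega
  rw [hd, Y_expand, Y_expand, base_gg_ff, base_gg_ff]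
  refine add_lt_add_right ?_ _
  have hgg00 : ∀ c : V, YY G H w c (gg G H w) (gg G H w) 0 0 = gg G H w ⬝ᵥ gg G H w := by
    intro c
    rw [YY, pow_zero, pow_zero, one_mul, Matrix.one_mulVec]
  refine Finset.sum_lt_sum (fun e he => ?_) ⟨0, by simp, ?_⟩
  · rw [base_gg_ff, base_gg_ff, mul_zero, mul_zero, zero_add, zero_add,
      base_ff_ff, base_ff_ff]
    have h1 := (Ycomp H w u v hcomp e 0).1
    have h2 : (0:ℝ) ≤ ((G.adjMatrix ℝ) ^ (k₀ + 1 - 1 - e)) v v :=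
      pow_entry_nonneg (fun i j => by
        simp only [SimpleGraph.adjMatrix_apply]; split_ifs <;> norm_num) _ v v
    exact mul_le_mul h1 (hcomp _) h2
      (le_trans (YY_nonneg G H w v (gg_nonneg G H w) (gg_nonneg G H w) e 0) h1)
  · rw [base_gg_ff, base_gg_ff, mul_zero, mul_zero, zero_add, zero_add,
      base_ff_ff, base_ff_ff, hgg00, hgg00]
    have he : k₀ + 1 - 1 - 0 = k₀ := by omega
    rw [he]
    exact mul_lt_mul_of_pos_left hstrict hD

end Setup

/-- Lemma 2.2.  If `(G;u,u) ≻ (G;v,v)`, then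
`EE(G(u)∘H(w)) > EE(G(v)∘H(w))`. -/
theorem statement_1 {V W : Type*} [Fintype V] [Fintype W] [DecidableEq W]
    (G : SimpleGraph V) (H : SimpleGraph W) (u v : V) (w : W) (huv : u ≠ v)
    (hG : G.Connected) (hH : H.Connected) (hW : 2 ≤ Fintype.card W)
    (h : MLT G v v G u u) :
    EE (coalescence G H v w) < EE (coalescence G H u w) := by
  letI := Classical.decEq V
  letI := Classical.decRel G.Adj
  letI := Classical.decRel H.Adj
  -- transfer the walk-count hypothesis to real matrix powers
  have hcast : ∀ (k : ℕ) (x y : V),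
      ((G.adjMatrix ℝ) ^ k) x y = ((G.adjMatrix ℕ ^ k) x y : ℝ) := by
    intro k x y
    have hmap : (Nat.castRingHom ℝ).mapMatrix (G.adjMatrix ℕ) = G.adjMatrix ℝ := by
      ext i j
      simp [SimpleGraph.adjMatrix_apply, Matrix.map_apply, apply_ite (Nat.cast : ℕ → ℝ)]
    rw [← hmap, ← map_pow, RingHom.mapMatrix_apply, Matrix.map_apply]
    simp
  have hMkv : ∀ k, Mk G k v v = (G.adjMatrix ℕ ^ k) v v := fun _ => rfl
  have hMku : ∀ k, Mk G k u u = (G.adjMatrix ℕ ^ k) u u := fun _ => rfl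
  have hcomp : ∀ m, ((G.adjMatrix ℝ) ^ m) v v ≤ ((G.adjMatrix ℝ) ^ m) u u := by
    intro m
    match m with
    | 0 => simp [pow_zero, Matrix.one_apply_eq]
    | (m + 1) =>
      rw [hcast, hcast]
      have := h.1 (m + 1) (Nat.succ_pos m)
      rw [hMkv, hMku] at this
      exact_mod_cast this
  obtain ⟨k₀, _, hk₀⟩ := h.2
  have hstrict : ((G.adjMatrix ℝ) ^ k₀) v v < ((G.adjMatrix ℝ) ^ k₀) u u := by
    rw [hcast, hcast]
    rw [hMkv, hMku] at hk₀
    exact_mod_cast hk₀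
  -- `w` has a neighbour in `W \ {w}`
  have hnb : ∃ b : {x : W // x ≠ w}, H.Adj w b.1 := by
    obtain ⟨y, hy⟩ := Fintype.exists_ne_of_one_lt_card (by omega) w
    obtain ⟨p⟩ := hH.preconnected w y
    cases p with
    | nil => exact absurd rfl hy
    | cons hadj _ => exact ⟨⟨_, hadj.ne'⟩, hadj⟩
  have hD : 0 < gg G H w ⬝ᵥ gg G H w := by
    obtain ⟨b, hb⟩ := hnb
    have hterm : gg G H w (Sum.inr b) * gg G H w (Sum.inr b) = 1 := by
      simp [gg, rr, hb]
    have hle : (1 : ℝ) ≤ ∑ i, gg G H w i * gg G H w i := by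
      rw [← hterm]
      exact Finset.single_le_sum
        (fun i _ => mul_nonneg (gg_nonneg G H w i) (gg_nonneg G H w i))
        (Finset.mem_univ (Sum.inr b))
    calc (0:ℝ) < 1 := one_pos
      _ ≤ _ := hle
  have hle : ∀ k, (AA G H w v ^ k).trace ≤ (AA G H w u ^ k).trace :=
    trace_le H w u v hcomp
  have hlt : (AA G H w v ^ (k₀ + 2)).trace < (AA G H w u ^ (k₀ + 2)).trace :=
    trace_lt H w u v hcomp k₀ hstrict hD
  have hEEv : EE (coalescence G H v w) = (NormedSpace.exp (AA G H w v)).trace := by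
    unfold EE AA
    congr!
  have hEEu : EE (coalescence G H u w) = (NormedSpace.exp (AA G H w u)).trace := by
    unfold EE AA
    congr!
  obtain ⟨hev, hsv⟩ := trace_exp_eq (AA G H w v)
  obtain ⟨heu, hsu⟩ := trace_exp_eq (AA G H w u)
  rw [hEEv, hEEu, hev, heu]
  refine Summable.tsum_lt_tsum (i := k₀ + 2) (fun k => ?_) ?_ hsv hsu
  · simp only [smul_eq_mul]
    exact mul_le_mul_of_nonneg_left (hle k) (by positivity)
  · simp only [smul_eq_mul]
    exact (mul_lt_mul_iff_right₀ (by positivity)).mpr hlt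


end EstradaBicyclic
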